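/- Suppose for each j = 1,…,n, (R_j, B_j, L_j) is a frame triple with bounds C_j ≤ D_j, where R_j are d×d expanding integer matrices and B_j, L_j ⊂ ℤ^d are finite sets containing 0. Let 𝐑_n = R_n⋯R_1, 𝐁_n = R_n⋯R_2(B_1) + R_n⋯R_3(B_2) + ⋯ + B_n, and Λ_n = L_1 + R_1ᵀ(L_2) + ⋯ + (R_1ᵀ⋯R_{n-1}ᵀ)(L_n). Then (𝐑_n, 𝐁_n, Λ_n) forms a frame triple with bounds ∏_{j=1}^n C_j and ∏_{j=1}^n D_j. -/

import Mathlib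

/-!
Induct on `n`, splitting off the last digit `b ∈ B_n` and the last frequency `l ∈ L_n`. For the
point `𝐱 = 𝐑_{n-1}⁻¹ 𝐛_{n-1}` of the first `n - 1` digits, `⟨𝐱, 𝐑_{n-1}ᵀ l⟩ = ⟨𝐛_{n-1}, l⟩` is an
integer, and `⟨𝐑_n⁻¹ b, 𝐑_{n-1}ᵀ l⟩ = ⟨R_n⁻¹ b, l⟩`. Hence the exponential vector of level `n`
factors as `e_{R_n, l}(b) · e_{n-1}(𝐛_{n-1}, λ_{n-1}) · ω(b, λ_{n-1})` with a unimodular phase `ω`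
(`crossPhase`). For fixed `λ_{n-1}` the phase only rescales the coefficients fed into the frame
inequality of `(R_n, B_n, L_n)` without changing their norms, so the bounds multiply.
-/

open Complex Matrix Finset

noncomputable section

/-- Real version of an integer matrix. -/
def realMat {d : ℕ} (R : Matrix (Fin d) (Fin d) ℤ) : Matrix (Fin d) (Fin d) ℝ :=
  R.map (Int.cast)

/-- `R` is expanding: all (complex) eigenvalues have modulus strictly greater than 1. -/
def Expanding {d : ℕ} (R : Matrix (Fin d) (Fin d) ℤ) : Prop :=
  ∀ z : ℂ, (R.map (Int.cast : ℤ → ℂ)).charpoly.IsRoot z → 1 < ‖z‖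

/-- Euclidean inner product on `ℝ^d`. -/
def ip {d : ℕ} (x y : Fin d → ℝ) : ℝ := ∑ i, x i * y i

/-- The vector `e_{R,λ} = (1/√#B) (e^{2πi⟨R⁻¹b,λ⟩})_{b∈B} ∈ ℂ^{#B}`. -/
def eVec {d : ℕ} (R : Matrix (Fin d) (Fin d) ℤ) (B : Finset (Fin d → ℤ))
    (lam : Fin d → ℤ) : B → ℂ :=
  fun b => ((Real.sqrt B.card : ℂ))⁻¹ *
    Complex.exp (2 * Real.pi * Complex.I *
      (ip ((realMat R)⁻¹ *ᵥ (fun j => ((b : Fin d → ℤ) j : ℝ))) (fun i => (lam i : ℝ))))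

/-- `(R,B,L)` is a frame triple with bounds `C ≤ D`. -/
def IsFrameTriple {d : ℕ} (R : Matrix (Fin d) (Fin d) ℤ) (B L : Finset (Fin d → ℤ))
    (C D : ℝ) : Prop :=
  ∀ x : B → ℂ,
    C * ∑ b, ‖x b‖ ^ 2 ≤ ∑ lam ∈ L, ‖∑ b, x b * (starRingEnd ℂ) (eVec R B lam b)‖ ^ 2 ∧
    ∑ lam ∈ L, ‖∑ b, x b * (starRingEnd ℂ) (eVec R B lam b)‖ ^ 2 ≤ D * ∑ b, ‖x b‖ ^ 2

/-- `(R,B,L)` is a Riesz sequence triple with bounds `C ≤ D`. -/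
def IsRieszTriple {d : ℕ} (R : Matrix (Fin d) (Fin d) ℤ) (B L : Finset (Fin d → ℤ))
    (C D : ℝ) : Prop :=
  ∀ a : L → ℂ,
    C * ∑ lam, ‖a lam‖ ^ 2 ≤ ∑ b, ‖∑ lam, a lam * eVec R B lam b‖ ^ 2 ∧
    ∑ b, ‖∑ lam, a lam * eVec R B lam b‖ ^ 2 ≤ D * ∑ lam, ‖a lam‖ ^ 2


/-- `𝐑_n = R_n ⋯ R_1` (with 0-based indexing: `bigR R n = R (n-1) * ⋯ * R 0`). -/
def bigR {d : ℕ} (R : ℕ → Matrix (Fin d) (Fin d) ℤ) : ℕ → Matrix (Fin d) (Fin d) ℤ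
  | 0 => 1
  | n + 1 => R n * bigR R n

def castVec {d : ℕ} (v : Fin d → ℤ) : Fin d → ℝ := fun i => (v i : ℝ)

/-- The point `𝐑_n⁻¹𝐛 = ∑_{k=1}^n 𝐑_k⁻¹ b_k` associated to a digit tuple. -/
def tuplePoint {d n : ℕ} (R : ℕ → Matrix (Fin d) (Fin d) ℤ) (B : ℕ → Finset (Fin d → ℤ))
    (t : (j : Fin n) → (B (j : ℕ))) : Fin d → ℝ :=
  ∑ j : Fin n, (realMat (bigR R ((j : ℕ) + 1)))⁻¹ *ᵥ castVec (t j)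

/-- The frequency `λ = ∑_{k=1}^n (R_1ᵀ⋯R_{k-1}ᵀ) l_k ∈ Λ_n` associated to a tuple. -/
def tupleFreq {d n : ℕ} (R : ℕ → Matrix (Fin d) (Fin d) ℤ) (L : ℕ → Finset (Fin d → ℤ))
    (l : (j : Fin n) → (L (j : ℕ))) : Fin d → ℤ :=
  ∑ j : Fin n, (bigR R (j : ℕ))ᵀ *ᵥ ((l j : Fin d → ℤ))

/-- The concatenated exponential vector entry
`(1/√(∏ #B_j)) e^{2πi ⟨𝐑_n⁻¹𝐛, λ⟩}` for the triple `(𝐑_n, 𝐁_n, Λ_n)`. -/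
def bigEVec {d n : ℕ} (R : ℕ → Matrix (Fin d) (Fin d) ℤ) (B L : ℕ → Finset (Fin d → ℤ))
    (t : (j : Fin n) → (B (j : ℕ))) (l : (j : Fin n) → (L (j : ℕ))) : ℂ :=
  ((Real.sqrt (∏ j ∈ Finset.range n, ((B j).card : ℝ)) : ℂ))⁻¹ *
    Complex.exp (2 * Real.pi * Complex.I *
      (ip (tuplePoint R B t) (castVec (tupleFreq R L l))))

section FrameBounds

variable {ι κ ι' κ' : Type*} [Fintype ι] [Fintype κ] [Fintype ι'] [Fintype κ']

def frameSum (e : ι → κ → ℂ) (x : ι → ℂ) : ℝ :=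
  ∑ k, ‖∑ i, x i * (starRingEnd ℂ) (e i k)‖ ^ 2

def HasFrameBounds (e : ι → κ → ℂ) (C D : ℝ) : Prop :=
  ∀ x : ι → ℂ, C * ∑ i, ‖x i‖ ^ 2 ≤ frameSum e x ∧ frameSum e x ≤ D * ∑ i, ‖x i‖ ^ 2

lemma hasFrameBounds_of_unique [Unique ι] [Unique κ] {e : ι → κ → ℂ}
    (he : ‖e default default‖ = 1) : HasFrameBounds e 1 1 := by
  intro x
  simp [frameSum, he]

lemma HasFrameBounds.of_comp_equiv {e : ι → κ → ℂ} {C D : ℝ} (σ : ι' ≃ ι) (τ : κ' ≃ κ)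
    (h : HasFrameBounds (fun i k => e (σ i) (τ k)) C D) : HasFrameBounds e C D := by
  intro x
  have hnorm : ∑ i', ‖x (σ i')‖ ^ 2 = ∑ i, ‖x i‖ ^ 2 := Equiv.sum_comp σ (fun i => ‖x i‖ ^ 2)
  have hsum : frameSum (fun i k => e (σ i) (τ k)) (x ∘ σ) = frameSum e x :=
    Fintype.sum_equiv τ _ _ fun k => by
      rw [← Equiv.sum_comp σ (fun i => x i * (starRingEnd ℂ) (e i (τ k)))]; rfl
  simpa only [hsum, Function.comp_apply, hnorm] using h (x ∘ σ)

section Product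

variable (e : ι → κ → ℂ) (E : ι' → κ' → ℂ) (ph : ι → κ' → ℂ)

def twistedProd : ι × ι' → κ × κ' → ℂ := fun p q => e p.1 q.1 * E p.2 q.2 * ph p.1 q.2

def partialCoeff (x : ι × ι' → ℂ) (k' : κ') (i : ι) : ℂ :=
  (starRingEnd ℂ) (ph i k') * ∑ i', x (i, i') * (starRingEnd ℂ) (E i' k')

lemma frameSum_prod (x : ι × ι' → ℂ) :
    frameSum (twistedProd e E ph) x =
      ∑ k', frameSum e (partialCoeff E ph x k') := by
  simp only [frameSum, partialCoeff, twistedProd, Fintype.sum_prod_type, map_mul, Finset.mul_sum,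
    Finset.sum_mul]
  rw [Finset.sum_comm]
  refine Finset.sum_congr rfl fun k' _ => Finset.sum_congr rfl fun k _ => ?_
  congr 2
  refine Finset.sum_congr rfl fun i _ => Finset.sum_congr rfl fun i' _ => ?_
  ring

lemma sum_sum_norm_partialCoeff_sq (hph : ∀ i k', ‖ph i k'‖ = 1) (x : ι × ι' → ℂ) :
    ∑ k', ∑ i, ‖partialCoeff E ph x k' i‖ ^ 2 = ∑ i, frameSum E (fun i' => x (i, i')) := by
  simp only [partialCoeff, norm_mul, RingHomIsometric.norm_map, hph, one_mul, frameSum]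
  exact Finset.sum_comm

end Product

theorem HasFrameBounds.prod_twist {e : ι → κ → ℂ} {E : ι' → κ' → ℂ} {ph : ι → κ' → ℂ}
    {C D C' D' : ℝ} (he : HasFrameBounds e C D)
    (hE : HasFrameBounds E C' D') (hC : 0 ≤ C) (hD : 0 ≤ D) (hph : ∀ i k', ‖ph i k'‖ = 1) :
    HasFrameBounds (twistedProd e E ph) (C * C') (D * D') := by
  intro x
  have hnorm : ∑ p, ‖x p‖ ^ 2 = ∑ i, ∑ i', ‖x (i, i')‖ ^ 2 := Fintype.sum_prod_type _
  rw [frameSum_prod, hnorm]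
  constructor
  · calc C * C' * ∑ i, ∑ i', ‖x (i, i')‖ ^ 2
        = C * ∑ i, C' * ∑ i', ‖x (i, i')‖ ^ 2 := by rw [mul_assoc, Finset.mul_sum]
      _ ≤ C * ∑ i, frameSum E (fun i' => x (i, i')) :=
        mul_le_mul_of_nonneg_left (Finset.sum_le_sum fun i _ => (hE _).1) hC
      _ = ∑ k', C * ∑ i, ‖partialCoeff E ph x k' i‖ ^ 2 := by
        rw [← sum_sum_norm_partialCoeff_sq E ph hph, Finset.mul_sum]
      _ ≤ ∑ k', frameSum e (partialCoeff E ph x k') :=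
        Finset.sum_le_sum fun k' _ => (he _).1
  · calc ∑ k', frameSum e (partialCoeff E ph x k')
        ≤ ∑ k', D * ∑ i, ‖partialCoeff E ph x k' i‖ ^ 2 :=
        Finset.sum_le_sum fun k' _ => (he _).2
      _ = D * ∑ i, frameSum E (fun i' => x (i, i')) := by
        rw [← sum_sum_norm_partialCoeff_sq E ph hph, Finset.mul_sum]
      _ ≤ D * ∑ i, D' * ∑ i', ‖x (i, i')‖ ^ 2 :=
        mul_le_mul_of_nonneg_left (Finset.sum_le_sum fun i _ => (hE _).2) hD
      _ = D * D' * ∑ i, ∑ i', ‖x (i, i')‖ ^ 2 := by rw [← Finset.mul_sum, mul_assoc]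

end FrameBounds

lemma IsFrameTriple.hasFrameBounds {d : ℕ} {R : Matrix (Fin d) (Fin d) ℤ}
    {B L : Finset (Fin d → ℤ)} {C D : ℝ} (h : IsFrameTriple R B L C D) :
    HasFrameBounds (fun (b : B) (lam : L) => eVec R B lam b) C D := fun x => by
  simpa only [frameSum, ← Finset.sum_coe_sort L] using h x

lemma Matrix.dotProduct_mulVec_transpose_mulVec {α n : Type*} [CommSemiring α] [Fintype n]
    (A N : Matrix n n α) (x y : n → α) : (A *ᵥ x) ⬝ᵥ (Nᵀ *ᵥ y) = ((N * A) *ᵥ x) ⬝ᵥ y := by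
  rw [dotProduct_mulVec, vecMul_transpose, mulVec_mulVec]

lemma norm_cexp_two_pi_I_mul_ofReal (r : ℝ) : ‖exp (2 * Real.pi * I * r)‖ = 1 := by
  rw [show 2 * Real.pi * I * r = ((2 * Real.pi * r : ℝ) : ℂ) * I by push_cast; ring]
  exact norm_exp_ofReal_mul_I _

lemma cexp_two_pi_I_mul_add_add_add_int (a b c : ℝ) (m : ℤ) :
    exp (2 * Real.pi * I * ((a + b + c + m : ℝ) : ℂ)) =
      exp (2 * Real.pi * I * a) * exp (2 * Real.pi * I * b) * exp (2 * Real.pi * I * c) := by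
  rw [show 2 * Real.pi * I * ((a + b + c + m : ℝ) : ℂ) = 2 * Real.pi * I * a +
      2 * Real.pi * I * b + 2 * Real.pi * I * c + m * (2 * Real.pi * I) by push_cast; ring,
    exp_add, exp_add, exp_add, exp_int_mul_two_pi_mul_I, mul_one]

section Concatenation

variable {d : ℕ}

lemma ip_eq_dotProduct (x y : Fin d → ℝ) : ip x y = x ⬝ᵥ y := rfl

lemma eVec_apply (A : Matrix (Fin d) (Fin d) ℤ) (B : Finset (Fin d → ℤ)) (lam : Fin d → ℤ)
    (b : B) : eVec A B lam b = (Real.sqrt B.card : ℂ)⁻¹ *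
      exp (2 * Real.pi * I * (ip ((realMat A)⁻¹ *ᵥ castVec (b : Fin d → ℤ)) (castVec lam))) :=
  rfl

lemma realMat_mul (A A' : Matrix (Fin d) (Fin d) ℤ) :
    realMat (A * A') = realMat A * realMat A' :=
  Matrix.map_mul (f := Int.castRingHom ℝ)

lemma realMat_transpose (A : Matrix (Fin d) (Fin d) ℤ) : realMat Aᵀ = (realMat A)ᵀ :=
  transpose_map

lemma castVec_add (v w : Fin d → ℤ) : castVec (v + w) = castVec v + castVec w := by
  funext i
  simp [castVec]

lemma castVec_mulVec (A : Matrix (Fin d) (Fin d) ℤ) (v : Fin d → ℤ) :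
    castVec (A *ᵥ v) = realMat A *ᵥ castVec v := by
  funext i
  simp [castVec, realMat, mulVec, dotProduct]

lemma castVec_dotProduct (v w : Fin d → ℤ) : castVec v ⬝ᵥ castVec w = ((v ⬝ᵥ w : ℤ) : ℝ) := by
  simp [castVec, dotProduct]

lemma Expanding.det_ne_zero {A : Matrix (Fin d) (Fin d) ℤ} (h : Expanding A) : A.det ≠ 0 := by
  intro hA
  have hroot : (A.map (Int.cast : ℤ → ℂ)).charpoly.IsRoot 0 := by
    rw [Polynomial.IsRoot, ← Polynomial.coeff_zero_eq_eval_zero]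
    have hsign := det_eq_sign_charpoly_coeff (A.map (Int.cast : ℤ → ℂ))
    rw [← Int.cast_det, hA, Int.cast_zero, eq_comm, mul_eq_zero] at hsign
    exact hsign.resolve_left (pow_ne_zero _ (neg_ne_zero.2 one_ne_zero))
  exact absurd (h 0 hroot) (by norm_num)

variable (R : ℕ → Matrix (Fin d) (Fin d) ℤ)

lemma bigR_succ (n : ℕ) : bigR R (n + 1) = R n * bigR R n := rfl

lemma det_bigR_ne_zero (hR : ∀ j, (R j).det ≠ 0) : ∀ m, (bigR R m).det ≠ 0
  | 0 => by simp [bigR]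
  | m + 1 => by rw [bigR_succ, det_mul]; exact mul_ne_zero (hR m) (det_bigR_ne_zero hR m)

lemma isUnit_det_realMat_bigR (hR : ∀ j, (R j).det ≠ 0) (m : ℕ) :
    IsUnit (realMat (bigR R m)).det := by
  rw [realMat, ← Int.cast_det, isUnit_iff_ne_zero, Int.cast_ne_zero]
  exact det_bigR_ne_zero R hR m

lemma exists_bigR_eq_mul {j n : ℕ} (h : j ≤ n) : ∃ P, bigR R n = P * bigR R j := by
  induction n, h using Nat.le_induction with
  | base => exact ⟨1, (one_mul _).symm⟩
  | succ n _ ih =>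
    obtain ⟨P, hP⟩ := ih
    exact ⟨R n * P, by rw [bigR_succ, hP, mul_assoc]⟩

lemma exists_int_ip_inv_bigR (hR : ∀ j, (R j).det ≠ 0) {j n : ℕ} (h : j ≤ n)
    (b v : Fin d → ℤ) : ∃ m : ℤ,
      ip ((realMat (bigR R j))⁻¹ *ᵥ castVec b) ((realMat (bigR R n))ᵀ *ᵥ castVec v) = m := by
  obtain ⟨P, hP⟩ := exists_bigR_eq_mul R h
  have hPj : realMat (bigR R n) * (realMat (bigR R j))⁻¹ = realMat P := by
    rw [hP, realMat_mul, mul_assoc, mul_nonsing_inv _ (isUnit_det_realMat_bigR R hR j), mul_one]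
  refine ⟨(P *ᵥ b) ⬝ᵥ v, ?_⟩
  rw [ip_eq_dotProduct, dotProduct_mulVec_transpose_mulVec, hPj,
    ← castVec_mulVec, castVec_dotProduct]

lemma ip_inv_bigR_succ (hR : ∀ j, (R j).det ≠ 0) (n : ℕ) (b v : Fin d → ℤ) :
    ip ((realMat (bigR R (n + 1)))⁻¹ *ᵥ castVec b) ((realMat (bigR R n))ᵀ *ᵥ castVec v) =
      ip ((realMat (R n))⁻¹ *ᵥ castVec b) (castVec v) := by
  have hinv : realMat (bigR R n) * (realMat (bigR R (n + 1)))⁻¹ = (realMat (R n))⁻¹ := by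
    rw [bigR_succ, realMat_mul, Matrix.mul_inv_rev, ← mul_assoc,
      mul_nonsing_inv _ (isUnit_det_realMat_bigR R hR n), one_mul]
  rw [ip_eq_dotProduct, ip_eq_dotProduct, dotProduct_mulVec_transpose_mulVec, hinv]

variable (B L : ℕ → Finset (Fin d → ℤ))

lemma exists_int_ip_tuplePoint (hR : ∀ j, (R j).det ≠ 0) {n : ℕ}
    (t : (j : Fin n) → B j) (v : Fin d → ℤ) :
    ∃ m : ℤ, ip (tuplePoint R B t) ((realMat (bigR R n))ᵀ *ᵥ castVec v) = m := by
  choose m hm using fun j : Fin n => exists_int_ip_inv_bigR R hR j.isLt (t j) v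
  refine ⟨∑ j, m j, ?_⟩
  simp only [tuplePoint, ip_eq_dotProduct, sum_dotProduct] at hm ⊢
  push_cast
  exact Finset.sum_congr rfl fun j _ => hm j

lemma tuplePoint_snoc {n : ℕ} (t : (j : Fin n) → B j) (b : B n) :
    tuplePoint R B (Fin.snoc t b) =
      tuplePoint R B t + (realMat (bigR R (n + 1)))⁻¹ *ᵥ castVec (b : Fin d → ℤ) := by
  simp [tuplePoint, Fin.sum_univ_castSucc]

lemma tupleFreq_snoc {n : ℕ} (l : (j : Fin n) → L j) (lam : L n) :
    tupleFreq R L (Fin.snoc l lam) = tupleFreq R L l + (bigR R n)ᵀ *ᵥ (lam : Fin d → ℤ) := by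
  simp [tupleFreq, Fin.sum_univ_castSucc]

def crossPhase {n : ℕ} (b : Fin d → ℤ) (l : (j : Fin n) → L j) : ℂ :=
  exp (2 * Real.pi * I *
    (ip ((realMat (bigR R (n + 1)))⁻¹ *ᵥ castVec b) (castVec (tupleFreq R L l)) : ℝ))

lemma norm_crossPhase {n : ℕ} (b : Fin d → ℤ) (l : (j : Fin n) → L j) :
    ‖crossPhase R L b l‖ = 1 :=
  norm_cexp_two_pi_I_mul_ofReal _

lemma exists_int_ip_tuplePoint_snoc (hR : ∀ j, (R j).det ≠ 0) {n : ℕ}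
    (t : (j : Fin n) → B j) (b : B n) (l : (j : Fin n) → L j) (lam : L n) :
    ∃ m : ℤ, ip (tuplePoint R B (Fin.snoc t b)) (castVec (tupleFreq R L (Fin.snoc l lam))) =
      ip ((realMat (R n))⁻¹ *ᵥ castVec (b : Fin d → ℤ)) (castVec (lam : Fin d → ℤ)) +
      ip (tuplePoint R B t) (castVec (tupleFreq R L l)) +
      ip ((realMat (bigR R (n + 1)))⁻¹ *ᵥ castVec (b : Fin d → ℤ)) (castVec (tupleFreq R L l)) +
      m := by
  obtain ⟨m, hm⟩ := exists_int_ip_tuplePoint R B hR t lam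
  refine ⟨m, ?_⟩
  rw [tuplePoint_snoc, tupleFreq_snoc, castVec_add, castVec_mulVec, realMat_transpose,
    ← ip_inv_bigR_succ R hR n, ← hm]
  simp only [ip_eq_dotProduct, add_dotProduct, dotProduct_add]
  ring

lemma bigEVec_snoc (hR : ∀ j, (R j).det ≠ 0) {n : ℕ}
    (t : (j : Fin n) → B j) (b : B n) (l : (j : Fin n) → L j) (lam : L n) :
    bigEVec R B L (Fin.snoc t b) (Fin.snoc l lam) =
      eVec (R n) (B n) lam b * bigEVec R B L t l * crossPhase R L (b : Fin d → ℤ) l := by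
  obtain ⟨m, hm⟩ := exists_int_ip_tuplePoint_snoc R B L hR t b l lam
  have hsqrt : (Real.sqrt (∏ j ∈ range (n + 1), ((B j).card : ℝ)) : ℂ)⁻¹ =
      (Real.sqrt (B n).card : ℂ)⁻¹ * (Real.sqrt (∏ j ∈ range n, ((B j).card : ℝ)) : ℂ)⁻¹ := by
    rw [prod_range_succ, mul_comm, Real.sqrt_mul (Nat.cast_nonneg _), ofReal_mul, mul_inv]
  rw [bigEVec, hm, hsqrt, cexp_two_pi_I_mul_add_add_add_int]
  simp only [eVec_apply, bigEVec, crossPhase]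
  ring

lemma norm_bigEVec_zero (t : (j : Fin 0) → B j) (l : (j : Fin 0) → L j) :
    ‖bigEVec R B L t l‖ = 1 := by
  simp [bigEVec, tuplePoint, ip]

theorem hasFrameBounds_bigEVec (hR : ∀ j, (R j).det ≠ 0) (C D : ℕ → ℝ) (hC : ∀ j, 0 ≤ C j)
    (hD : ∀ j, 0 ≤ D j) : ∀ n, (∀ j < n, IsFrameTriple (R j) (B j) (L j) (C j) (D j)) →
      HasFrameBounds (bigEVec R B L (n := n)) (∏ j ∈ range n, C j) (∏ j ∈ range n, D j)
  | 0, _ => by simpa using hasFrameBounds_of_unique (norm_bigEVec_zero R B L _ _)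
  | n + 1, htriple => by
    have hlast := (htriple n n.lt_succ_self).hasFrameBounds.prod_twist
      (hasFrameBounds_bigEVec hR C D hC hD n fun j hj => htriple j (hj.trans n.lt_succ_self))
      (hC n) (hD n) (fun b l => norm_crossPhase R L (b : Fin d → ℤ) l)
    have hsnoc : twistedProd (fun (b : B n) (lam : L n) => eVec (R n) (B n) lam b)
        (bigEVec R B L) (fun b => crossPhase R L (b : Fin d → ℤ)) =
          fun p q => bigEVec R B L (Fin.snocEquiv (fun j : Fin (n + 1) => B j) p)
            (Fin.snocEquiv (fun j : Fin (n + 1) => L j) q) :=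
      funext₂ fun p q => (bigEVec_snoc R B L hR p.2 p.1 q.2 q.1).symm
    rw [prod_range_succ, prod_range_succ, mul_comm, mul_comm (∏ j ∈ range n, D j)]
    exact HasFrameBounds.of_comp_equiv _ _ (hsnoc ▸ hlast)

end Concatenation

theorem frame_triple_concatenation_general {d n : ℕ}
    (R : ℕ → Matrix (Fin d) (Fin d) ℤ) (B L : ℕ → Finset (Fin d → ℤ)) (C D : ℕ → ℝ)
    (hexp : ∀ j, Expanding (R j))
    (hCD : ∀ j, 0 < C j ∧ C j ≤ D j)
    (htriple : ∀ j < n, IsFrameTriple (R j) (B j) (L j) (C j) (D j)) :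
    ∀ x : ((j : Fin n) → (B (j : ℕ))) → ℂ,
      (∏ j ∈ Finset.range n, C j) * ∑ t, ‖x t‖ ^ 2 ≤
        ∑ l : (j : Fin n) → (L (j : ℕ)),
          ‖∑ t, x t * (starRingEnd ℂ) (bigEVec R B L t l)‖ ^ 2 ∧
      ∑ l : (j : Fin n) → (L (j : ℕ)),
          ‖∑ t, x t * (starRingEnd ℂ) (bigEVec R B L t l)‖ ^ 2 ≤
        (∏ j ∈ Finset.range n, D j) * ∑ t, ‖x t‖ ^ 2 :=
  hasFrameBounds_bigEVec R B L (fun j => (hexp j).det_ne_zero) C D (fun j => (hCD j).1.le)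
    (fun j => (hCD j).1.le.trans (hCD j).2) n htriple

theorem frame_triple_concatenation {d n : ℕ}
    (R : ℕ → Matrix (Fin d) (Fin d) ℤ) (B L : ℕ → Finset (Fin d → ℤ)) (C D : ℕ → ℝ)
    (hexp : ∀ j, Expanding (R j))
    (h0B : ∀ j, (0 : Fin d → ℤ) ∈ B j) (h0L : ∀ j, (0 : Fin d → ℤ) ∈ L j)
    (hCD : ∀ j, 0 < C j ∧ C j ≤ D j)
    (htriple : ∀ j < n, IsFrameTriple (R j) (B j) (L j) (C j) (D j)) :
    ∀ x : ((j : Fin n) → (B (j : ℕ))) → ℂ,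
      (∏ j ∈ Finset.range n, C j) * ∑ t, ‖x t‖ ^ 2 ≤
        ∑ l : (j : Fin n) → (L (j : ℕ)),
          ‖∑ t, x t * (starRingEnd ℂ) (bigEVec R B L t l)‖ ^ 2 ∧
      ∑ l : (j : Fin n) → (L (j : ℕ)),
          ‖∑ t, x t * (starRingEnd ℂ) (bigEVec R B L t l)‖ ^ 2 ≤
        (∏ j ∈ Finset.range n, D j) * ∑ t, ‖x t‖ ^ 2 :=
  frame_triple_concatenation_general R B L C D hexp hCD htriple

end
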